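/- arXiv:2301.07292 — 3 statements merged into one kernel-verified Lean document; each statement's English description precedes it below -/
import Mathlib

section
/- If a hub arc (h,l) with weight τ_hl satisfies d(or,h) + τ_hl > ḡ or d(l,de) + τ_hl > ḡ, then every or→de path traversing (h,l) has cost strictly greater than ḡ; hence, under every network design z with Z_fixed ⊆ z, no optimal z-feasible path traverses (h,l), and the corresponding arc-usage variable x_hl can be fixed to zero without changing the optimal follower value. -/
/-- A directed path `p` traverses the arc `a : h ⟶ l` if it decomposes as a path
to `h`, followed by `a`, followed by a path from `l`. -/
def Traverses {V : Type} [Quiver V] {o de h l : V}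
    (p : Quiver.Path o de) (a : h ⟶ l) : Prop :=
  ∃ (p₁ : Quiver.Path o h) (p₂ : Quiver.Path l de), p = (p₁.cons a).comp p₂

/-- A path is feasible under a design `z` (a set of open hub arcs) if every hub
arc it traverses lies in `z`. -/
def FeasibleUnder {V : Type} [Quiver V]
    (Hub : ∀ {u v : V}, (u ⟶ v) → Prop)
    (z : Set (Σ u : V, Σ v : V, u ⟶ v)) {o de : V} (p : Quiver.Path o de) : Prop :=
  ∀ (h l : V) (a : h ⟶ l), Traverses p a → Hub a →
    (⟨h, l, a⟩ : Σ u : V, Σ v : V, u ⟶ v) ∈ z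

/-- If a hub arc `(h,l)` with weight `τ_hl = w a` satisfies
`d(or,h) + τ_hl > ḡ` or `d(l,de) + τ_hl > ḡ`, then every `or→de` path traversing
`(h,l)` has cost strictly greater than `ḡ`; hence, under every network design
`z ⊇ Z_fixed`, no optimal `z`-feasible path traverses `(h,l)`, and forbidding the
arc does not change the optimal follower value. -/
theorem stmt4 {V : Type} [Quiver V]
    (w : ∀ {u v : V}, (u ⟶ v) → ℝ) (hw : ∀ {u v : V} (a : u ⟶ v), 0 ≤ w a)
    (cost : ∀ {u v : V}, Quiver.Path u v → ℝ)
    (hcost_nil : ∀ u : V, cost (Quiver.Path.nil : Quiver.Path u u) = 0)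
    (hcost_cons : ∀ {u v x : V} (p : Quiver.Path u v) (a : v ⟶ x),
      cost (p.cons a) = cost p + w a)
    (d : V → V → ℝ)
    (hd : ∀ u v : V, Nonempty (Quiver.Path u v) →
      IsLeast {c : ℝ | ∃ p : Quiver.Path u v, cost p = c} (d u v))
    (Hub : ∀ {u v : V}, (u ⟶ v) → Prop)
    (Zfixed : Set (Σ u : V, Σ v : V, u ⟶ v))
    (or de : V) (gbar : ℝ)
    (hgbar : IsLeast
      {c : ℝ | ∃ p : Quiver.Path or de, FeasibleUnder Hub Zfixed p ∧ cost p = c} gbar)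
    (h l : V) (a : h ⟶ l) (hHub : Hub a)
    (hfar : gbar < d or h + w a ∨ gbar < d l de + w a) :
    (∀ p : Quiver.Path or de, Traverses p a → gbar < cost p) ∧
    (∀ z : Set (Σ u : V, Σ v : V, u ⟶ v), Zfixed ⊆ z →
      (∀ p : Quiver.Path or de, FeasibleUnder Hub z p → Traverses p a →
        ∃ q : Quiver.Path or de, FeasibleUnder Hub z q ∧ cost q < cost p) ∧
      (∀ v : ℝ,
        IsLeast {c : ℝ | ∃ p : Quiver.Path or de,
          FeasibleUnder Hub z p ∧ cost p = c} v ↔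
        IsLeast {c : ℝ | ∃ p : Quiver.Path or de,
          FeasibleUnder Hub z p ∧ ¬ Traverses p a ∧ cost p = c} v)) := by
  -- cost of composition
  have hcomp : ∀ {u v x : V} (p : Quiver.Path u v) (q : Quiver.Path v x),
      cost (p.comp q) = cost p + cost q := by
    intro u v x p q
    induction q with
    | nil => simp [hcost_nil]
    | cons q' b ih =>
        rw [Quiver.Path.comp_cons, hcost_cons, ih, hcost_cons]; ring
  -- cost nonneg
  have hnn : ∀ {u v : V} (p : Quiver.Path u v), 0 ≤ cost p := by
    intro u v p
    induction p with
    | nil => simp [hcost_nil]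
    | cons p' b ih => rw [hcost_cons]; exact add_nonneg ih (hw b)
  -- main strict inequality
  have key : ∀ p : Quiver.Path or de, Traverses p a → gbar < cost p := by
    intro p ⟨p₁, p₂, hp⟩
    have hc : cost p = cost p₁ + w a + cost p₂ := by
      rw [hp, hcomp, hcost_cons]
    have h1 : d or h ≤ cost p₁ := (hd or h ⟨p₁⟩).2 ⟨p₁, rfl⟩
    have h2 : d l de ≤ cost p₂ := (hd l de ⟨p₂⟩).2 ⟨p₂, rfl⟩
    rcases hfar with hf | hf
    · calc gbar < d or h + w a := hf
        _ ≤ cost p₁ + w a + cost p₂ := by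
            have := hnn p₂; linarith
        _ = cost p := hc.symm
    · calc gbar < d l de + w a := hf
        _ ≤ cost p₁ + w a + cost p₂ := by
            have := hnn p₁; linarith
        _ = cost p := hc.symm
  refine ⟨key, fun z hz => ?_⟩
  obtain ⟨⟨p₀, hp₀f, hp₀c⟩, hlb⟩ := hgbar
  have hp₀z : FeasibleUnder Hub z p₀ := fun h' l' a' ht hh => hz (hp₀f h' l' a' ht hh)
  have hp₀nt : ¬ Traverses p₀ a := fun ht => absurd (hp₀c ▸ key p₀ ht) (lt_irrefl _)
  constructor
  · intro p hpf hpt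
    exact ⟨p₀, hp₀z, by rw [hp₀c]; exact key p hpt⟩
  · intro v
    constructor
    · rintro ⟨⟨p, hpf, hpc⟩, hvlb⟩
      have hpnt : ¬ Traverses p a := by
        intro ht
        have h1 : gbar < cost p := key p ht
        have h2 : v ≤ gbar := hvlb ⟨p₀, hp₀z, hp₀c⟩
        rw [hpc] at h1; linarith
      exact ⟨⟨p, hpf, hpnt, hpc⟩, fun c ⟨q, hqf, _, hqc⟩ => hvlb ⟨q, hqf, hqc⟩⟩
    · rintro ⟨⟨p, hpf, hpnt, hpc⟩, hvlb⟩
      refine ⟨⟨p, hpf, hpc⟩, ?_⟩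
      rintro c ⟨q, hqf, hqc⟩
      by_cases ht : Traverses q a
      · have h1 : gbar < c := hqc ▸ key q ht
        have h2 : v ≤ gbar := hvlb ⟨p₀, hp₀z, hp₀nt, hp₀c⟩
        linarith
      · exact hvlb ⟨q, hqf, ht, hqc⟩
end

section
/- Suppose ḡ = min_{π∈Π} g(π) and the minimum of g over Π̄ is attained by a unique path π̄, i.e., argmin_{π ∈ Π̄} g(π) = {π̄}. Then for every network design z with Z_fixed ⊆ z, π̄ is z-feasible and g(π̄) = min{g(π) : π ∈ Π, x(π) ⊆ z}; that is, π̄ is an optimal path assignment for the trip under every network design. -/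
/-- Suppose `ḡ = min_{π∈Π} g(π)` and the minimum of `g` over `Π̄` is
attained by a unique path `π̄`. Then for every network design `z` with
`Z_fixed ⊆ z`, `π̄` is `z`-feasible and `g(π̄) = min{g(π) : π ∈ Π, x(π) ⊆ z}`. -/
theorem stmt5 {E P : Type} [DecidableEq E]
    (Pi : Finset P) (x : P → Finset E) (g : P → ℝ)
    (hPi : Pi.Nonempty) (hg : ∀ π ∈ Pi, 0 ≤ g π)
    (Zfixed : Finset E)
    (hbar : (Pi.filter fun π => x π ⊆ Zfixed).Nonempty)
    (gbar : ℝ) (hgbar : gbar = (Pi.filter fun π => x π ⊆ Zfixed).inf' hbar g)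
    (hmin : gbar = Pi.inf' hPi g)
    (πbar : P)
    (hπbar_mem : πbar ∈ Pi.filter fun π => x π ⊆ Zfixed)
    (hπbar_g : g πbar = gbar)
    (huniq : ∀ π ∈ Pi.filter fun π => x π ⊆ Zfixed, g π = gbar → π = πbar)
    (z : Finset E) (hz : Zfixed ⊆ z) :
    ∃ hF : (Pi.filter fun π => x π ⊆ z).Nonempty,
      πbar ∈ (Pi.filter fun π => x π ⊆ z) ∧
      g πbar = (Pi.filter fun π => x π ⊆ z).inf' hF g := by
  simp only [Finset.mem_filter] at hπbar_mem
  have hmem : πbar ∈ Pi.filter fun π => x π ⊆ z :=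
    Finset.mem_filter.mpr ⟨hπbar_mem.1, hπbar_mem.2.trans hz⟩
  refine ⟨⟨πbar, hmem⟩, hmem, le_antisymm ?_ (Finset.inf'_le g hmem)⟩
  apply Finset.le_inf'
  intro b hb
  rw [hπbar_g, hmin]
  exact Finset.inf'_le g (Finset.mem_filter.mp hb).1
end

section
/- Suppose ḡ = min_{π∈Π} g(π) and no minimizer of g over Π is adopted, i.e., {π ∈ Π : g(π) = ḡ} ∩ A = ∅. Then for every network design z with Z_fixed ⊆ z, the optimal z-feasible value equals ḡ and every optimal z-feasible path π (i.e., every z-feasible π with g(π) = min{g(π') : π' ∈ Π, x(π') ⊆ z}) satisfies C(π) = 0; hence the rider rejects the ODMTS under every network design. -/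
/-- Suppose `ḡ = min_{π∈Π} g(π)` and no minimizer of `g` over `Π` is
adopted. Then for every network design `z` with `Z_fixed ⊆ z`, the optimal
`z`-feasible value equals `ḡ` and every optimal `z`-feasible path `π` satisfies
`C(π) = 0`; hence the rider rejects the ODMTS under every network design. -/
theorem stmt7 {E P : Type} [DecidableEq E]
    (Pi : Finset P) (x : P → Finset E) (g : P → ℝ)
    (hPi : Pi.Nonempty) (hg : ∀ π ∈ Pi, 0 ≤ g π)
    (Zfixed : Finset E)
    (hbar : (Pi.filter fun π => x π ⊆ Zfixed).Nonempty)
    (gbar : ℝ) (hgbar : gbar = (Pi.filter fun π => x π ⊆ Zfixed).inf' hbar g)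
    (C : P → ℕ) (hC : ∀ π ∈ Pi, C π = 0 ∨ C π = 1)
    (φ : ℝ) (hφ : 0 < φ)
    (hmin : gbar = Pi.inf' hPi g)
    (hreject : ∀ π ∈ Pi, g π = gbar → C π ≠ 1)
    (z : Finset E) (hz : Zfixed ⊆ z) :
    ∃ hF : (Pi.filter fun π => x π ⊆ z).Nonempty,
      (Pi.filter fun π => x π ⊆ z).inf' hF g = gbar ∧
      ∀ π ∈ Pi.filter fun π => x π ⊆ z,
        g π = (Pi.filter fun π => x π ⊆ z).inf' hF g → C π = 0 := by
  have hsub : (Pi.filter fun π => x π ⊆ Zfixed) ⊆ (Pi.filter fun π => x π ⊆ z) := by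
    intro π hπ
    simp only [Finset.mem_filter] at *
    exact ⟨hπ.1, hπ.2.trans hz⟩
  have hF : (Pi.filter fun π => x π ⊆ z).Nonempty := hbar.mono hsub
  have hinf : (Pi.filter fun π => x π ⊆ z).inf' hF g = gbar := by
    apply le_antisymm
    · rw [hgbar]
      exact Finset.inf'_mono g hsub hbar
    · rw [hmin]
      apply Finset.le_inf'
      intro b hb
      exact Finset.inf'_le g (Finset.filter_subset _ _ hb)
  refine ⟨hF, hinf, ?_⟩
  intro π hπ hgπ
  have hπPi : π ∈ Pi := Finset.mem_of_mem_filter _ hπ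
  rcases hC π hπPi with h | h
  · exact h
  · exact absurd h (hreject π hπPi (by rw [hgπ, hinf]))
end
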